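/- arXiv:1605.06662 — 4 statements merged into one kernel-verified Lean document; each statement's English description precedes it below -/
import Mathlib

section
/- For s ∈ (0,1), the function w_{1,s}(x₁,x₂) = (1/(s²−1)) (√(x₁²+x₂²)+x₁)^s (s√(x₁²+x₂²) − x₁) satisfies the degenerate elliptic equation ∂₁(x₂^{1−2s} ∂₁ w) + ∂₂(x₂^{1−2s} ∂₂ w) = 0 at every point of the open upper half-plane {(x₁,x₂) ∈ ℝ² : x₂ > 0}. -/
/-! With `r = √(x₁² + x₂²)` and `P = r + x₁`, one has `∂₁ P = P / r` and `∂₂ P = x₂ / r`, hence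
`∂₁ w = P^s` and `∂₂ w = s/(s-1) · x₂ P^{s-1}`. Both flux derivatives are then multiples of
`s x₂^{1-2s} P^{s-2} / r`, with cofactors `P²` and `x₂² - 2 r P`, and these cancel because
`P² - 2 r P + x₂² = x₁² + x₂² - r² = 0`. -/

open Real Filter Topology

/-- The model solution `w_{1,s}` of the fractional thin obstacle problem. -/
noncomputable def w1 (s x₁ x₂ : ℝ) : ℝ :=
  (1 / (s ^ 2 - 1)) * (Real.sqrt (x₁ ^ 2 + x₂ ^ 2) + x₁) ^ s *
    (s * Real.sqrt (x₁ ^ 2 + x₂ ^ 2) - x₁)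

lemma sqrt_sq_add_sq_add_pos (a : ℝ) {b : ℝ} (hb : b ≠ 0) : 0 < √(a ^ 2 + b ^ 2) + a := by
  have : |a| < √(a ^ 2 + b ^ 2) := by
    rw [← Real.sqrt_sq_eq_abs]
    exact Real.sqrt_lt_sqrt (sq_nonneg a) (by simpa using sq_pos_of_ne_zero hb)
  linarith [neg_abs_le a]

section Derivatives

variable {a b : ℝ}

lemma hasDerivAt_sqrt_sq_add_sq_left (h : 0 < a ^ 2 + b ^ 2) :
    HasDerivAt (fun t => √(t ^ 2 + b ^ 2)) (a / √(a ^ 2 + b ^ 2)) a := by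
  have hr : √(a ^ 2 + b ^ 2) ≠ 0 := (Real.sqrt_pos.2 h).ne'
  convert ((hasDerivAt_pow 2 a).add_const (b ^ 2)).sqrt h.ne' using 1
  field_simp
  ring

lemma hasDerivAt_sqrt_sq_add_sq_right (h : 0 < a ^ 2 + b ^ 2) :
    HasDerivAt (fun t => √(a ^ 2 + t ^ 2)) (b / √(a ^ 2 + b ^ 2)) b := by
  have hr : √(a ^ 2 + b ^ 2) ≠ 0 := (Real.sqrt_pos.2 h).ne'
  convert ((hasDerivAt_pow 2 b).const_add (a ^ 2)).sqrt h.ne' using 1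
  field_simp
  ring

lemma hasDerivAt_sqrt_sq_add_sq_add (h : 0 < a ^ 2 + b ^ 2) :
    HasDerivAt (fun t => √(t ^ 2 + b ^ 2) + t)
      ((√(a ^ 2 + b ^ 2) + a) / √(a ^ 2 + b ^ 2)) a := by
  have hr : √(a ^ 2 + b ^ 2) ≠ 0 := (Real.sqrt_pos.2 h).ne'
  refine ((hasDerivAt_sqrt_sq_add_sq_left h).fun_add (hasDerivAt_id' a)).congr_deriv ?_
  rw [add_div, div_self hr, add_comm]

variable {s : ℝ}

lemma hasDerivAt_w1_fst (hs : s ^ 2 ≠ 1) (hb : b ≠ 0) :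
    HasDerivAt (fun t => w1 s t b) ((√(a ^ 2 + b ^ 2) + a) ^ s) a := by
  have h : 0 < a ^ 2 + b ^ 2 := by positivity
  have hP := sqrt_sq_add_sq_add_pos a hb
  refine ((((hasDerivAt_sqrt_sq_add_sq_add h).rpow_const (Or.inl hP.ne')).const_mul
    (1 / (s ^ 2 - 1))).mul (((hasDerivAt_sqrt_sq_add_sq_left h).const_mul s).fun_sub
      (hasDerivAt_id' a))).congr_deriv ?_
  have hr : √(a ^ 2 + b ^ 2) ≠ 0 := (Real.sqrt_pos.2 h).ne'
  have hs' : s ^ 2 - 1 ≠ 0 := sub_ne_zero.2 hs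
  rw [Real.rpow_sub_one hP.ne']
  field_simp
  ring

lemma hasDerivAt_w1_snd (hs : s ^ 2 ≠ 1) (hb : b ≠ 0) :
    HasDerivAt (fun t => w1 s a t) (s / (s - 1) * b * (√(a ^ 2 + b ^ 2) + a) ^ (s - 1)) b := by
  have h : 0 < a ^ 2 + b ^ 2 := by positivity
  have hP := sqrt_sq_add_sq_add_pos a hb
  have hsqrt := hasDerivAt_sqrt_sq_add_sq_right h
  refine ((((hsqrt.add_const a).rpow_const (Or.inl hP.ne')).const_mul
    (1 / (s ^ 2 - 1))).mul ((hsqrt.const_mul s).sub_const a)).congr_deriv ?_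
  have hr : √(a ^ 2 + b ^ 2) ≠ 0 := (Real.sqrt_pos.2 h).ne'
  have hs' : s ^ 2 - 1 ≠ 0 := sub_ne_zero.2 hs
  have hs1 : s - 1 ≠ 0 := fun h1 => hs (by rw [sub_eq_zero.1 h1]; norm_num)
  rw [Real.rpow_sub_one hP.ne']
  field_simp
  ring

lemma hasDerivAt_const_mul_deriv_w1_fst (hs : s ^ 2 ≠ 1) (hb : b ≠ 0) (c : ℝ) :
    HasDerivAt (fun t => c * deriv (fun a => w1 s a b) t)
      (c * ((√(a ^ 2 + b ^ 2) + a) / √(a ^ 2 + b ^ 2) * s * (√(a ^ 2 + b ^ 2) + a) ^ (s - 1))) a := by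
  have hderiv : deriv (fun a => w1 s a b) = fun t => (√(t ^ 2 + b ^ 2) + t) ^ s :=
    funext fun _ => (hasDerivAt_w1_fst hs hb).deriv
  rw [hderiv]
  exact ((hasDerivAt_sqrt_sq_add_sq_add (by positivity)).rpow_const
    (Or.inl (sqrt_sq_add_sq_add_pos a hb).ne')).const_mul c

lemma hasDerivAt_rpow_mul_deriv_w1_snd (hs : s ^ 2 ≠ 1) (hb : 0 < b) :
    HasDerivAt (fun t => t ^ (1 - 2 * s) * deriv (fun b => w1 s a b) t)
      (s / (s - 1) * ((2 - 2 * s) * b ^ (2 - 2 * s - 1) * (√(a ^ 2 + b ^ 2) + a) ^ (s - 1)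
        + b ^ (2 - 2 * s) * (b / √(a ^ 2 + b ^ 2) * (s - 1) * (√(a ^ 2 + b ^ 2) + a) ^ (s - 1 - 1))))
      b := by
  have hflux : (fun t => t ^ (1 - 2 * s) * deriv (fun b => w1 s a b) t) =ᶠ[𝓝 b]
      fun t => s / (s - 1) * (t ^ (2 - 2 * s) * (√(a ^ 2 + t ^ 2) + a) ^ (s - 1)) := by
    filter_upwards [lt_mem_nhds hb] with t ht
    rw [(hasDerivAt_w1_snd hs ht.ne').deriv, show 2 - 2 * s = 1 - 2 * s + 1 by ring,
      Real.rpow_add_one ht.ne']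
    ring
  refine HasDerivAt.congr_of_eventuallyEq ?_ hflux
  exact ((Real.hasDerivAt_rpow_const (Or.inl hb.ne')).mul
    (((hasDerivAt_sqrt_sq_add_sq_right (by positivity)).add_const a).rpow_const
      (Or.inl (sqrt_sq_add_sq_add_pos a hb.ne').ne'))).const_mul _

end Derivatives

lemma extension_flux_sum_eq_zero {s r P b : ℝ} (hs : s ≠ 1) (hb : 0 < b) (hr : r ≠ 0) (hP : 0 < P)
    (h : P ^ 2 - 2 * r * P + b ^ 2 = 0) :
    b ^ (1 - 2 * s) * (P / r * s * P ^ (s - 1)) + s / (s - 1) * ((2 - 2 * s) * b ^ (2 - 2 * s - 1)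
      * P ^ (s - 1) + b ^ (2 - 2 * s) * (b / r * (s - 1) * P ^ (s - 1 - 1))) = 0 := by
  have hs1 : s - 1 ≠ 0 := sub_ne_zero.2 hs
  rw [show 2 - 2 * s - 1 = 1 - 2 * s by ring, show 2 - 2 * s = 1 - 2 * s + 1 by ring,
    Real.rpow_add_one hb.ne', Real.rpow_sub_one hP.ne' (s - 1)]
  field_simp
  linear_combination (s ^ 2 - s) * b ^ (1 - 2 * s) * P ^ (s - 1) * h

/-- `w_{1,s}` solves `∂₁(x₂^{1-2s} ∂₁ w) + ∂₂(x₂^{1-2s} ∂₂ w) = 0` in the open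
upper half-plane. -/
theorem stmt0 (s : ℝ) (hs : s ∈ Set.Ioo (0 : ℝ) 1) (x₁ x₂ : ℝ) (hx₂ : 0 < x₂) :
    deriv (fun t => x₂ ^ (1 - 2 * s) * deriv (fun a => w1 s a x₂) t) x₁
      + deriv (fun t => t ^ (1 - 2 * s) * deriv (fun b => w1 s x₁ b) t) x₂ = 0 := by
  have hs2 : s ^ 2 ≠ 1 := by nlinarith [hs.1, hs.2]
  rw [(hasDerivAt_const_mul_deriv_w1_fst hs2 hx₂.ne' _).deriv,
    (hasDerivAt_rpow_mul_deriv_w1_snd hs2 hx₂).deriv]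
  have hr : √(x₁ ^ 2 + x₂ ^ 2) ^ 2 = x₁ ^ 2 + x₂ ^ 2 := Real.sq_sqrt (by positivity)
  refine extension_flux_sum_eq_zero hs.2.ne hx₂ (Real.sqrt_pos.2 (by positivity)).ne'
    (sqrt_sq_add_sq_add_pos x₁ hx₂.ne') ?_
  linear_combination -hr
end

section
/- For s ∈ (0,1) and (x₁,x₂) in the open upper half-plane, writing r = √(x₁²+x₂²), the model solution w_{1,s}(x₁,x₂) = (1/(s²−1))(r+x₁)^s(s r − x₁) satisfies ∂₁ w_{1,s}(x₁,x₂) = (r+x₁)^s and x₂^{1−2s} ∂₂ w_{1,s}(x₁,x₂) = (s/(s−1)) (r−x₁)^{1−s}. -/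
open Real

/-- Tangential and weighted normal derivatives of the model solution:
`∂₁ w_{1,s} = (r+x₁)^s` and `x₂^{1-2s} ∂₂ w_{1,s} = (s/(s-1)) (r-x₁)^{1-s}`. -/
theorem stmt1 (s : ℝ) (hs : s ∈ Set.Ioo (0 : ℝ) 1) (x₁ x₂ : ℝ) (hx₂ : 0 < x₂) :
    deriv (fun a => w1 s a x₂) x₁ = (Real.sqrt (x₁ ^ 2 + x₂ ^ 2) + x₁) ^ s ∧
    x₂ ^ (1 - 2 * s) * deriv (fun b => w1 s x₁ b) x₂
      = (s / (s - 1)) * (Real.sqrt (x₁ ^ 2 + x₂ ^ 2) - x₁) ^ (1 - s) := by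
  obtain ⟨hs0, hs1⟩ := hs
  set r := Real.sqrt (x₁ ^ 2 + x₂ ^ 2) with hrdef
  have hr2 : r ^ 2 = x₁ ^ 2 + x₂ ^ 2 := Real.sq_sqrt (by positivity)
  have hr0 : 0 < r := Real.sqrt_pos.2 (by positivity)
  have habs : |x₁| < r := by
    have h1 : |x₁| = Real.sqrt (x₁ ^ 2) := (Real.sqrt_sq_eq_abs x₁).symm
    rw [h1, hrdef]
    exact Real.sqrt_lt_sqrt (by positivity) (by nlinarith)
  have hrp : 0 < r + x₁ := by have := abs_lt.1 habs; linarith [this.1]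
  have hrm : 0 < r - x₁ := by have := abs_lt.1 habs; linarith [this.2]
  have hs2 : s ^ 2 - 1 ≠ 0 := by nlinarith
  have hsm : s - 1 ≠ 0 := by linarith
  have key : (r + x₁) ^ s = (r + x₁) ^ (s - 1) * (r + x₁) := by
    rw [← Real.rpow_add_one hrp.ne' (s - 1)]
    norm_num
  constructor
  · -- tangential derivative
    have h1 : HasDerivAt (fun a : ℝ => a ^ 2 + x₂ ^ 2) (2 * x₁) x₁ := by
      simpa using (hasDerivAt_pow 2 x₁).add_const (x₂ ^ 2)
    have h2 : HasDerivAt (fun a : ℝ => Real.sqrt (a ^ 2 + x₂ ^ 2)) (x₁ / r) x₁ := by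
      have := h1.sqrt (by positivity)
      convert this using 1
      rw [← hrdef]
      field_simp
    have h3 : HasDerivAt (fun a : ℝ => Real.sqrt (a ^ 2 + x₂ ^ 2) + a) (x₁ / r + 1) x₁ :=
      h2.add (hasDerivAt_id x₁)
    have h4 : HasDerivAt (fun a : ℝ => (Real.sqrt (a ^ 2 + x₂ ^ 2) + a) ^ s)
        ((x₁ / r + 1) * s * (r + x₁) ^ (s - 1)) x₁ := by
      have := h3.rpow_const (p := s) (Or.inl (by rw [← hrdef]; exact hrp.ne'))
      rwa [← hrdef] at this
    have h5 : HasDerivAt (fun a : ℝ => s * Real.sqrt (a ^ 2 + x₂ ^ 2) - a)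
        (s * (x₁ / r) - 1) x₁ := (h2.const_mul s).sub (hasDerivAt_id x₁)
    have h6 := (h4.mul h5).const_mul (1 / (s ^ 2 - 1))
    have h7 : HasDerivAt (fun a => w1 s a x₂)
        (1 / (s ^ 2 - 1) * (((x₁ / r + 1) * s * (r + x₁) ^ (s - 1)) *
          (s * Real.sqrt (x₁ ^ 2 + x₂ ^ 2) - x₁) +
          (Real.sqrt (x₁ ^ 2 + x₂ ^ 2) + x₁) ^ s * (s * (x₁ / r) - 1))) x₁ := by
      simpa [w1, mul_assoc] using h6
    rw [h7.deriv, ← hrdef, key]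
    field_simp
    ring
  · -- normal derivative
    have h1 : HasDerivAt (fun b : ℝ => x₁ ^ 2 + b ^ 2) (2 * x₂) x₂ := by
      simpa using ((hasDerivAt_pow 2 x₂).const_add (x₁ ^ 2))
    have h2 : HasDerivAt (fun b : ℝ => Real.sqrt (x₁ ^ 2 + b ^ 2)) (x₂ / r) x₂ := by
      have := h1.sqrt (by positivity)
      convert this using 1
      rw [← hrdef]
      field_simp
    have h3 : HasDerivAt (fun b : ℝ => Real.sqrt (x₁ ^ 2 + b ^ 2) + x₁) (x₂ / r) x₂ :=
      h2.add_const x₁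
    have h4 : HasDerivAt (fun b : ℝ => (Real.sqrt (x₁ ^ 2 + b ^ 2) + x₁) ^ s)
        ((x₂ / r) * s * (r + x₁) ^ (s - 1)) x₂ := by
      have := h3.rpow_const (p := s) (Or.inl (by rw [← hrdef]; exact hrp.ne'))
      rwa [← hrdef] at this
    have h5 : HasDerivAt (fun b : ℝ => s * Real.sqrt (x₁ ^ 2 + b ^ 2) - x₁)
        (s * (x₂ / r)) x₂ := (h2.const_mul s).sub_const x₁
    have h6 := (h4.mul h5).const_mul (1 / (s ^ 2 - 1))
    have h7 : HasDerivAt (fun b => w1 s x₁ b)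
        (1 / (s ^ 2 - 1) * (((x₂ / r) * s * (r + x₁) ^ (s - 1)) *
          (s * Real.sqrt (x₁ ^ 2 + x₂ ^ 2) - x₁) +
          (Real.sqrt (x₁ ^ 2 + x₂ ^ 2) + x₁) ^ s * (s * (x₂ / r)))) x₂ := by
      simpa [w1, mul_assoc] using h6
    have hD : deriv (fun b => w1 s x₁ b) x₂ = s / (s - 1) * x₂ * (r + x₁) ^ (s - 1) := by
      rw [h7.deriv, ← hrdef, key]
      field_simp
      ring
    have hrsub : r - x₁ = x₂ ^ 2 / (r + x₁) := by
      field_simp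
      nlinarith [hr2]
    have hpow : (r - x₁) ^ (1 - s) = x₂ ^ (2 - 2 * s) * (r + x₁) ^ (s - 1) := by
      rw [hrsub, Real.div_rpow (by positivity) hrp.le]
      rw [show (r + x₁) ^ (s - 1) = ((r + x₁) ^ (1 - s))⁻¹ by
        rw [← Real.rpow_neg hrp.le]; norm_num]
      rw [div_eq_mul_inv]
      congr 1
      rw [← Real.rpow_natCast x₂ 2, ← Real.rpow_mul hx₂.le]
      norm_num
      ring_nf
    rw [hD, hpow]
    rw [show x₂ ^ (2 - 2 * s) = x₂ ^ (1 - 2 * s) * x₂ by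
      rw [← Real.rpow_add_one hx₂.ne' (1 - 2 * s)]; ring_nf]
    ring
end

section
/- Let s ∈ (0,1), a = 1−2s, and let w be a C³ function on an open subset of {x ∈ ℝ^{n+1} : x_{n+1} > 0} satisfying ∇·(x_{n+1}^{a} ∇w) = x_{n+1}^{a} f with f ∈ C¹. Then the conjugate function w̄ := x_{n+1}^{a} ∂_{n+1} w satisfies ∇·(x_{n+1}^{−a} ∇w̄) = ∂_{n+1} f on the same set. -/
open Real

/-- The `i`-th partial derivative of a function on `ℝ^{n+1}`. -/
noncomputable def pd {m : ℕ} (i : Fin m) (u : (Fin m → ℝ) → ℝ) (x : Fin m → ℝ) : ℝ :=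
  deriv (fun t => u (Function.update x i t)) (x i)

/-- The weighted operator `∇·(x_{n+1}^{b} ∇u)` on `ℝ^{n+1}`. -/
noncomputable def Lb (n : ℕ) (b : ℝ) (u : (Fin (n + 1) → ℝ) → ℝ)
    (x : Fin (n + 1) → ℝ) : ℝ :=
  ∑ i, pd i (fun y => y (Fin.last n) ^ b * pd i u y) x

/-!
Write `Lb n b u = x_{n+1}^b Δ'u + ∂_{n+1}(x_{n+1}^b ∂_{n+1}u)`. The equation for `w` says
`x_{n+1}^{-a} ∂_{n+1} w̄ = f - Δ'w`, so the normal part of `Lb n (-a) w̄` is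
`∂_{n+1} f - ∂_{n+1} Δ'w`. The tangential part is `x_{n+1}^{-a} Δ' w̄ = Δ' ∂_{n+1} w`, since the
weight does not depend on the tangential variables, and it cancels the second term because partial
derivatives of a `C³` function commute.
-/

open Filter Topology

section PartialDerivative

variable {m : ℕ} {i j k : Fin m} {u v : (Fin m → ℝ) → ℝ} {x : Fin m → ℝ} {U : Set (Fin m → ℝ)}

lemma hasDerivAt_update_fderiv (h : DifferentiableAt ℝ u x) :
    HasDerivAt (fun t => u (Function.update x i t)) (fderiv ℝ u x (Pi.single i 1)) (x i) := by
  have h' : HasFDerivAt u (fderiv ℝ u x) (Function.update x i (x i)) := by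
    rw [Function.update_eq_self]
    exact h.hasFDerivAt
  exact h'.comp_hasDerivAt (x i) (hasDerivAt_update x i (x i))

lemma pd_eq_fderiv (h : DifferentiableAt ℝ u x) : pd i u x = fderiv ℝ u x (Pi.single i 1) :=
  (hasDerivAt_update_fderiv h).deriv

lemma hasDerivAt_update_pd (h : DifferentiableAt ℝ u x) :
    HasDerivAt (fun t => u (Function.update x i t)) (pd i u x) (x i) :=
  pd_eq_fderiv (i := i) h ▸ hasDerivAt_update_fderiv h

lemma pd_congr_of_eventuallyEq (h : u =ᶠ[𝓝 x] v) : pd i u x = pd i v x := by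
  have hline : Tendsto (fun t : ℝ => Function.update x i t) (𝓝 (x i)) (𝓝 x) := by
    simpa using (hasDerivAt_update x i (x i)).continuousAt.tendsto
  exact Filter.EventuallyEq.deriv_eq (hline.eventually h)

lemma pd_sub (hu : DifferentiableAt ℝ u x) (hv : DifferentiableAt ℝ v x) :
    pd i (fun y => u y - v y) x = pd i u x - pd i v x :=
  ((hasDerivAt_update_pd hu).sub (hasDerivAt_update_pd hv)).deriv

lemma pd_sum {ι : Type*} (S : Finset ι) (F : ι → (Fin m → ℝ) → ℝ)
    (h : ∀ j ∈ S, DifferentiableAt ℝ (F j) x) :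
    pd i (fun y => ∑ j ∈ S, F j y) x = ∑ j ∈ S, pd i (F j) x :=
  (HasDerivAt.fun_sum fun j hj => hasDerivAt_update_pd (h j hj)).deriv

lemma pd_comp_mul_of_ne (φ : ℝ → ℝ) (hik : i ≠ k) :
    pd i (fun y => φ (y k) * u y) x = φ (x k) * pd i u x := by
  simp only [pd, Function.update_of_ne hik.symm]
  exact deriv_const_mul_field _

lemma contDiffOn_pd (hU : IsOpen U) {r : WithTop ℕ∞} (hu : ContDiffOn ℝ (r + 1) u U) :
    ContDiffOn ℝ r (pd i u) U := by
  refine ((hu.fderiv_of_isOpen hU le_rfl).clm_apply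
    (contDiffOn_const (c := (Pi.single i 1 : Fin m → ℝ)))).congr fun z hz => ?_
  exact pd_eq_fderiv (((hu.differentiableOn (by simp)) z hz).differentiableAt (hU.mem_nhds hz))

lemma pd_pd_eq_fderiv_fderiv (hU : IsOpen U) (hu : ContDiffOn ℝ 2 u U) (hx : x ∈ U) :
    pd i (pd j u) x = fderiv ℝ (fderiv ℝ u) x (Pi.single i 1) (Pi.single j 1) := by
  have hpd : pd j u =ᶠ[𝓝 x] fun z => fderiv ℝ u z (Pi.single j 1) := by
    filter_upwards [hU.mem_nhds hx] with z hz
    exact pd_eq_fderiv (((hu.differentiableOn (by norm_num)) z hz).differentiableAt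
      (hU.mem_nhds hz))
  have hD2 : HasFDerivAt (fderiv ℝ u) (fderiv ℝ (fderiv ℝ u) x) x :=
    ((((hu.fderiv_of_isOpen hU (by norm_num : (1 : WithTop ℕ∞) + 1 ≤ 2)).differentiableOn
      one_ne_zero) x hx).differentiableAt (hU.mem_nhds hx)).hasFDerivAt
  have hD : HasFDerivAt (fun z => fderiv ℝ u z (Pi.single j 1))
      ((fderiv ℝ (fderiv ℝ u) x).flip (Pi.single j 1)) x := by
    simpa using hD2.clm_apply (hasFDerivAt_const (Pi.single j 1 : Fin m → ℝ) x)
  rw [pd_congr_of_eventuallyEq hpd, pd_eq_fderiv hD.differentiableAt, hD.fderiv]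
  rfl

lemma pd_comm (hU : IsOpen U) (hu : ContDiffOn ℝ 2 u U) (hx : x ∈ U) :
    pd i (pd j u) x = pd j (pd i u) x := by
  rw [pd_pd_eq_fderiv_fderiv hU hu hx, pd_pd_eq_fderiv_fderiv hU hu hx]
  exact (hu.contDiffAt (hU.mem_nhds hx)).isSymmSndFDerivAt
    (by simp [minSmoothness_of_isRCLikeNormedField]) _ _

lemma pd_pd_pd_comm (hU : IsOpen U) (hu : ContDiffOn ℝ 3 u U) (hx : x ∈ U) :
    pd j (pd j (pd k u)) x = pd k (pd j (pd j u)) x := by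
  have hinner : pd j (pd k u) =ᶠ[𝓝 x] pd k (pd j u) := by
    filter_upwards [hU.mem_nhds hx] with z hz
    exact pd_comm hU (hu.of_le (by norm_num)) hz
  rw [pd_congr_of_eventuallyEq hinner]
  exact pd_comm hU (contDiffOn_pd hU (hu.of_le (by norm_num) : ContDiffOn ℝ (2 + 1) u U)) hx

end PartialDerivative

noncomputable def tangentialLaplacian (n : ℕ) (u : (Fin (n + 1) → ℝ) → ℝ)
    (x : Fin (n + 1) → ℝ) : ℝ :=
  ∑ j : Fin n, pd j.castSucc (pd j.castSucc u) x

section TangentialLaplacian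

variable {n : ℕ} {u : (Fin (n + 1) → ℝ) → ℝ} {U : Set (Fin (n + 1) → ℝ)}

lemma Lb_eq_tangentialLaplacian_add (b : ℝ) (u : (Fin (n + 1) → ℝ) → ℝ) (x : Fin (n + 1) → ℝ) :
    Lb n b u x = x (Fin.last n) ^ b * tangentialLaplacian n u x
      + pd (Fin.last n) (fun y => y (Fin.last n) ^ b * pd (Fin.last n) u y) x := by
  rw [Lb, Fin.sum_univ_castSucc, tangentialLaplacian, Finset.mul_sum]
  congr 1
  exact Finset.sum_congr rfl fun j _ =>
    pd_comp_mul_of_ne (· ^ b) (Fin.castSucc_lt_last j).ne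

lemma tangentialLaplacian_comp_last_mul (φ : ℝ → ℝ) (x : Fin (n + 1) → ℝ) :
    tangentialLaplacian n (fun y => φ (y (Fin.last n)) * u y) x
      = φ (x (Fin.last n)) * tangentialLaplacian n u x := by
  rw [tangentialLaplacian, tangentialLaplacian, Finset.mul_sum]
  refine Finset.sum_congr rfl fun j _ => ?_
  have hj : j.castSucc ≠ Fin.last n := (Fin.castSucc_lt_last j).ne
  have hpd : pd j.castSucc (fun y => φ (y (Fin.last n)) * u y)
      = fun y => φ (y (Fin.last n)) * pd j.castSucc u y :=
    funext fun y => pd_comp_mul_of_ne φ hj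
  rw [hpd, pd_comp_mul_of_ne φ hj]

lemma contDiffOn_tangentialLaplacian (hU : IsOpen U) {r : WithTop ℕ∞}
    (hu : ContDiffOn ℝ (r + 1 + 1) u U) : ContDiffOn ℝ r (tangentialLaplacian n u) U :=
  ContDiffOn.sum fun _ _ => contDiffOn_pd hU (contDiffOn_pd hU hu)

lemma pd_tangentialLaplacian (hU : IsOpen U) (hu : ContDiffOn ℝ 3 u U) (i : Fin (n + 1))
    {x : Fin (n + 1) → ℝ} (hx : x ∈ U) :
    pd i (tangentialLaplacian n u) x = tangentialLaplacian n (pd i u) x := by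
  have hu' : ContDiffOn ℝ (1 + 1 + 1) u U := hu.of_le (by norm_num)
  unfold tangentialLaplacian
  rw [pd_sum _ _ fun _ _ => ((contDiffOn_pd hU (contDiffOn_pd hU hu')).contDiffAt
      (hU.mem_nhds hx)).differentiableAt one_ne_zero]
  exact Finset.sum_congr rfl fun _ _ => (pd_pd_pd_comm hU hu hx).symm

end TangentialLaplacian

theorem Lb_neg_conj {n : ℕ} (a : ℝ) {U : Set (Fin (n + 1) → ℝ)} (hU : IsOpen U)
    (hUsub : U ⊆ {x | 0 < x (Fin.last n)}) {w f : (Fin (n + 1) → ℝ) → ℝ}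
    (hw : ContDiffOn ℝ 3 w U) (hf : DifferentiableOn ℝ f U)
    (heq : ∀ x ∈ U, Lb n a w x = x (Fin.last n) ^ a * f x) {x : Fin (n + 1) → ℝ} (hx : x ∈ U) :
    Lb n (-a) (fun y => y (Fin.last n) ^ a * pd (Fin.last n) w y) x = pd (Fin.last n) f x := by
  have cancel : ∀ y ∈ U, ∀ z : ℝ, y (Fin.last n) ^ (-a) * (y (Fin.last n) ^ a * z) = z :=
    fun y hy z => by
      rw [Real.rpow_neg (hUsub hy).le, inv_mul_cancel_left₀ (Real.rpow_pos_of_pos (hUsub hy) a).ne']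
  have hnormal : (fun y => y (Fin.last n) ^ (-a)
        * pd (Fin.last n) (fun y => y (Fin.last n) ^ a * pd (Fin.last n) w y) y)
      =ᶠ[𝓝 x] fun y => f y - tangentialLaplacian n w y := by
    filter_upwards [hU.mem_nhds hx] with y hy
    have hy' := heq y hy
    rw [Lb_eq_tangentialLaplacian_add] at hy'
    rw [← cancel y hy (f y - _)]
    congr 1
    linarith
  have hΔw : DifferentiableAt ℝ (tangentialLaplacian n w) x :=
    ((contDiffOn_tangentialLaplacian hU (hw.of_le (by norm_num) : ContDiffOn ℝ (1 + 1 + 1) w U)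
      ).contDiffAt (hU.mem_nhds hx)).differentiableAt one_ne_zero
  rw [Lb_eq_tangentialLaplacian_add, tangentialLaplacian_comp_last_mul (· ^ a), cancel x hx,
    pd_congr_of_eventuallyEq hnormal, pd_sub (hf.differentiableAt (hU.mem_nhds hx)) hΔw,
    pd_tangentialLaplacian hU hw (Fin.last n) hx]
  ring

theorem stmt7_general (n : ℕ) (s : ℝ)
    (U : Set (Fin (n + 1) → ℝ)) (hU : IsOpen U)
    (hUsub : U ⊆ {x | 0 < x (Fin.last n)})
    (w f : (Fin (n + 1) → ℝ) → ℝ)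
    (hw : ContDiffOn ℝ 3 w U) (hf : ContDiffOn ℝ 1 f U)
    (heq : ∀ x ∈ U, Lb n (1 - 2 * s) w x = x (Fin.last n) ^ (1 - 2 * s) * f x) :
    ∀ x ∈ U,
      Lb n (2 * s - 1)
          (fun y => y (Fin.last n) ^ (1 - 2 * s) * pd (Fin.last n) w y) x
        = pd (Fin.last n) f x := by
  intro x hx
  rw [show 2 * s - 1 = -(1 - 2 * s) by ring]
  exact Lb_neg_conj _ hU hUsub hw (hf.differentiableOn one_ne_zero) heq hx

/-- Conjugation: if `∇·(x_{n+1}^{a}∇w) = x_{n+1}^{a} f` with `a = 1-2s` on an open subset of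
the upper half-space, then `w̄ := x_{n+1}^{a} ∂_{n+1} w` satisfies
`∇·(x_{n+1}^{-a}∇w̄) = ∂_{n+1} f` there. -/
theorem stmt7 (n : ℕ) (s : ℝ) (hs : s ∈ Set.Ioo (0 : ℝ) 1)
    (U : Set (Fin (n + 1) → ℝ)) (hU : IsOpen U)
    (hUsub : U ⊆ {x | 0 < x (Fin.last n)})
    (w f : (Fin (n + 1) → ℝ) → ℝ)
    (hw : ContDiffOn ℝ 3 w U) (hf : ContDiffOn ℝ 1 f U)
    (heq : ∀ x ∈ U, Lb n (1 - 2 * s) w x = x (Fin.last n) ^ (1 - 2 * s) * f x) :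
    ∀ x ∈ U,
      Lb n (2 * s - 1)
          (fun y => y (Fin.last n) ^ (1 - 2 * s) * pd (Fin.last n) w y) x
        = pd (Fin.last n) f x :=
  stmt7_general n s U hU hUsub w f hw hf heq
end

section
/- Let s ∈ (0,1) and let u : {(x₁,x₂) ∈ ℝ² : x₂ > 0} → ℝ be C². Define Φ(y₁,y₂) := (½(y₁² − y₂²), y₁ y₂) for y₁, y₂ > 0, and v := u ∘ Φ. Then on the open quarter-plane {y₁ > 0, y₂ > 0}: ∂₁((y₁y₂)^{1−2s} ∂₁ v) + ∂₂((y₁y₂)^{1−2s} ∂₂ v) = (y₁² + y₂²) · [∂₁(x₂^{1−2s}∂₁u) + ∂₂(x₂^{1−2s}∂₂u)] ∘ Φ. -/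
open Real

/-! Write `σ = 1 - 2s`. The columns `(y₁, y₂)` and `(-y₂, y₁)` of `DΦ(y)` are orthogonal with
common squared length `y₁² + y₂²`, so by the second-order chain rule the second-derivative parts
of `∂₁(ω ∂₁v) + ∂₂(ω ∂₂v)` add up to `(y₁² + y₂²) (∂₁₁u + ∂₂₂u) ∘ Φ`, the mixed terms cancelling.
The terms `±∂₁u` coming from the curvature of the two coordinate curves of `Φ` cancel, and
differentiating the weight gives `σ (y₁y₂)^(σ-1) (y₁² + y₂²) ∂₂u ∘ Φ`, which is `(y₁² + y₂²)`
times the first-order part `σ x₂^(σ-1) ∂₂u` of `∂₂(x₂^σ ∂₂u)`. -/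

open Filter Topology Function

section SecondOrderChainRule

variable {E F : Type*} [NormedAddCommGroup E] [NormedSpace ℝ E]
  [NormedAddCommGroup F] [NormedSpace ℝ F]

theorem hasDerivAt_smul_deriv_comp {f : E → F} {γ γ' : ℝ → E} {γ'' : E} {w : ℝ → ℝ}
    {w' t : ℝ} (hγ : ∀ᶠ τ in 𝓝 t, HasDerivAt γ (γ' τ) τ) (hγ' : HasDerivAt γ' γ'' t)
    (hf : ∀ᶠ τ in 𝓝 t, DifferentiableAt ℝ f (γ τ))
    (hf' : DifferentiableAt ℝ (fderiv ℝ f) (γ t)) (hw : HasDerivAt w w' t) :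
    HasDerivAt (fun τ => w τ • deriv (fun τ => f (γ τ)) τ)
      (w t • (fderiv ℝ (fderiv ℝ f) (γ t) (γ' t) (γ' t) + fderiv ℝ f (γ t) γ'')
        + w' • fderiv ℝ f (γ t) (γ' t)) t := by
  have hderiv : (fun τ => deriv (fun τ => f (γ τ)) τ) =ᶠ[𝓝 t]
      fun τ => fderiv ℝ f (γ τ) (γ' τ) := by
    filter_upwards [hγ, hf] with τ hγτ hfτ
    exact (hfτ.hasFDerivAt.comp_hasDerivAt τ hγτ).deriv
  have hD := (hf'.hasFDerivAt.comp_hasDerivAt t hγ.self_of_nhds).clm_apply hγ'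
  simpa only [comp_apply, hderiv.eq_of_nhds] using hw.fun_smul (hD.congr_of_eventuallyEq hderiv)

end SecondOrderChainRule

theorem ContinuousLinearMap.apply_prod_eq {M : Type*} [AddCommGroup M] [Module ℝ M]
    [TopologicalSpace M] (T : ℝ × ℝ →L[ℝ] M) (a b : ℝ) :
    T (a, b) = a • T (1, 0) + b • T (0, 1) := by
  rw [← map_smul, ← map_smul, ← map_add]
  simp

theorem ContinuousLinearMap.apply_apply_add_apply_apply_rotate
    (B : ℝ × ℝ →L[ℝ] ℝ × ℝ →L[ℝ] ℝ) (a b : ℝ) :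
    B (a, b) (a, b) + B (-b, a) (-b, a)
      = (a ^ 2 + b ^ 2) * (B (1, 0) (1, 0) + B (0, 1) (0, 1)) := by
  rw [B.apply_prod_eq a b, B.apply_prod_eq (-b) a]
  simp only [add_apply, smul_apply, smul_eq_mul]
  rw [(B (1, 0)).apply_prod_eq a b, (B (0, 1)).apply_prod_eq a b,
    (B (1, 0)).apply_prod_eq (-b) a, (B (0, 1)).apply_prod_eq (-b) a]
  simp only [smul_eq_mul]
  ring

section SquareMap

variable {u : ℝ → ℝ → ℝ} (σ : ℝ)

theorem deriv_rpow_mul_deriv_comp_squareMap_fst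
    (hu : ∀ p : ℝ × ℝ, 0 < p.2 → DifferentiableAt ℝ (uncurry u) p) {y₁ y₂ : ℝ}
    (h₁ : 0 < y₁) (h₂ : 0 < y₂)
    (hu' : DifferentiableAt ℝ (fderiv ℝ (uncurry u)) ((y₁ ^ 2 - y₂ ^ 2) / 2, y₁ * y₂)) :
    deriv (fun t => (t * y₂) ^ σ * deriv (fun a => u ((a ^ 2 - y₂ ^ 2) / 2) (a * y₂)) t) y₁
      = (y₁ * y₂) ^ σ * (fderiv ℝ (fderiv ℝ (uncurry u)) ((y₁ ^ 2 - y₂ ^ 2) / 2, y₁ * y₂)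
            (y₁, y₂) (y₁, y₂) + fderiv ℝ (uncurry u) ((y₁ ^ 2 - y₂ ^ 2) / 2, y₁ * y₂) (1, 0))
        + y₂ * σ * (y₁ * y₂) ^ (σ - 1)
          * fderiv ℝ (uncurry u) ((y₁ ^ 2 - y₂ ^ 2) / 2, y₁ * y₂) (y₁, y₂) := by
  have hγ (τ : ℝ) : HasDerivAt (fun a => ((a ^ 2 - y₂ ^ 2) / 2, a * y₂)) (τ, y₂) τ :=
    .prodMk (by simpa using ((hasDerivAt_pow 2 τ).sub_const (y₂ ^ 2)).div_const 2)
      (by simpa using (hasDerivAt_id τ).mul_const y₂)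
  have hγ' : HasDerivAt (fun a : ℝ => (a, y₂)) (1, 0) y₁ :=
    (hasDerivAt_id y₁).prodMk (hasDerivAt_const y₁ y₂)
  have hf : ∀ᶠ τ in 𝓝 y₁, DifferentiableAt ℝ (uncurry u) ((τ ^ 2 - y₂ ^ 2) / 2, τ * y₂) := by
    filter_upwards [Ioi_mem_nhds h₁] with τ hτ using hu _ (mul_pos hτ h₂)
  have hw : HasDerivAt (fun t => (t * y₂) ^ σ) (y₂ * σ * (y₁ * y₂) ^ (σ - 1)) y₁ := by
    simpa using ((hasDerivAt_id y₁).mul_const y₂).rpow_const (p := σ) (Or.inl (mul_pos h₁ h₂).ne')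
  simpa using (hasDerivAt_smul_deriv_comp (.of_forall hγ) hγ' hf hu' hw).deriv

theorem deriv_rpow_mul_deriv_comp_squareMap_snd
    (hu : ∀ p : ℝ × ℝ, 0 < p.2 → DifferentiableAt ℝ (uncurry u) p) {y₁ y₂ : ℝ}
    (h₁ : 0 < y₁) (h₂ : 0 < y₂)
    (hu' : DifferentiableAt ℝ (fderiv ℝ (uncurry u)) ((y₁ ^ 2 - y₂ ^ 2) / 2, y₁ * y₂)) :
    deriv (fun t => (y₁ * t) ^ σ * deriv (fun b => u ((y₁ ^ 2 - b ^ 2) / 2) (y₁ * b)) t) y₂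
      = (y₁ * y₂) ^ σ * (fderiv ℝ (fderiv ℝ (uncurry u)) ((y₁ ^ 2 - y₂ ^ 2) / 2, y₁ * y₂)
            (-y₂, y₁) (-y₂, y₁) + fderiv ℝ (uncurry u) ((y₁ ^ 2 - y₂ ^ 2) / 2, y₁ * y₂) (-1, 0))
        + y₁ * σ * (y₁ * y₂) ^ (σ - 1)
          * fderiv ℝ (uncurry u) ((y₁ ^ 2 - y₂ ^ 2) / 2, y₁ * y₂) (-y₂, y₁) := by
  have hγ (τ : ℝ) : HasDerivAt (fun b => ((y₁ ^ 2 - b ^ 2) / 2, y₁ * b)) (-τ, y₁) τ :=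
    .prodMk (by simpa [neg_div] using ((hasDerivAt_pow 2 τ).const_sub (y₁ ^ 2)).div_const 2)
      (by simpa using (hasDerivAt_id τ).const_mul y₁)
  have hγ' : HasDerivAt (fun b : ℝ => (-b, y₁)) (-1, 0) y₂ :=
    (hasDerivAt_id y₂).neg.prodMk (hasDerivAt_const y₂ y₁)
  have hf : ∀ᶠ τ in 𝓝 y₂, DifferentiableAt ℝ (uncurry u) ((y₁ ^ 2 - τ ^ 2) / 2, y₁ * τ) := by
    filter_upwards [Ioi_mem_nhds h₂] with τ hτ using hu _ (mul_pos h₁ hτ)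
  have hw : HasDerivAt (fun t => (y₁ * t) ^ σ) (y₁ * σ * (y₁ * y₂) ^ (σ - 1)) y₂ := by
    simpa using ((hasDerivAt_id y₂).const_mul y₁).rpow_const (p := σ) (Or.inl (mul_pos h₁ h₂).ne')
  simpa using (hasDerivAt_smul_deriv_comp (.of_forall hγ) hγ' hf hu' hw).deriv

theorem deriv_const_mul_deriv_comp_fst
    (hu : ∀ p : ℝ × ℝ, 0 < p.2 → DifferentiableAt ℝ (uncurry u) p) (k : ℝ) {x₁ x₂ : ℝ}
    (hx : 0 < x₂) (hu' : DifferentiableAt ℝ (fderiv ℝ (uncurry u)) (x₁, x₂)) :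
    deriv (fun t => k * deriv (fun a => u a x₂) t) x₁
      = k * fderiv ℝ (fderiv ℝ (uncurry u)) (x₁, x₂) (1, 0) (1, 0) := by
  have hγ (τ : ℝ) : HasDerivAt (fun a : ℝ => (a, x₂)) (1, 0) τ :=
    (hasDerivAt_id τ).prodMk (hasDerivAt_const τ x₂)
  have hf : ∀ᶠ τ in 𝓝 x₁, DifferentiableAt ℝ (uncurry u) (τ, x₂) := .of_forall fun τ => hu _ hx
  simpa using (hasDerivAt_smul_deriv_comp (.of_forall hγ) (hasDerivAt_const x₁ _) hf hu'
    (hasDerivAt_const x₁ k)).deriv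

theorem deriv_rpow_mul_deriv_comp_snd
    (hu : ∀ p : ℝ × ℝ, 0 < p.2 → DifferentiableAt ℝ (uncurry u) p) {x₁ x₂ : ℝ}
    (hx : 0 < x₂) (hu' : DifferentiableAt ℝ (fderiv ℝ (uncurry u)) (x₁, x₂)) :
    deriv (fun t => t ^ σ * deriv (fun b => u x₁ b) t) x₂
      = x₂ ^ σ * fderiv ℝ (fderiv ℝ (uncurry u)) (x₁, x₂) (0, 1) (0, 1)
        + σ * x₂ ^ (σ - 1) * fderiv ℝ (uncurry u) (x₁, x₂) (0, 1) := by
  have hγ (τ : ℝ) : HasDerivAt (fun b : ℝ => (x₁, b)) (0, 1) τ :=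
    (hasDerivAt_const τ x₁).prodMk (hasDerivAt_id τ)
  have hf : ∀ᶠ τ in 𝓝 x₂, DifferentiableAt ℝ (uncurry u) (x₁, τ) := by
    filter_upwards [Ioi_mem_nhds hx] with τ hτ using hu _ hτ
  have hw : HasDerivAt (fun t => t ^ σ) (σ * x₂ ^ (σ - 1)) x₂ :=
    hasDerivAt_rpow_const (Or.inl hx.ne')
  simpa using (hasDerivAt_smul_deriv_comp (.of_forall hγ) (hasDerivAt_const x₂ _) hf hu' hw).deriv

end SquareMap

theorem stmt16_general (s : ℝ) (u : ℝ → ℝ → ℝ)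
    (hu : ContDiffOn ℝ 2 (fun p : ℝ × ℝ => u p.1 p.2) {p : ℝ × ℝ | 0 < p.2})
    (y₁ y₂ : ℝ) (h₁ : 0 < y₁) (h₂ : 0 < y₂) :
    deriv (fun t => (t * y₂) ^ (1 - 2 * s) *
        deriv (fun a => u ((a ^ 2 - y₂ ^ 2) / 2) (a * y₂)) t) y₁
      + deriv (fun t => (y₁ * t) ^ (1 - 2 * s) *
          deriv (fun b => u ((y₁ ^ 2 - b ^ 2) / 2) (y₁ * b)) t) y₂
      = (y₁ ^ 2 + y₂ ^ 2) *
          (deriv (fun t => (y₁ * y₂) ^ (1 - 2 * s) *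
              deriv (fun a => u a (y₁ * y₂)) t) ((y₁ ^ 2 - y₂ ^ 2) / 2)
            + deriv (fun t => t ^ (1 - 2 * s) *
                deriv (fun b => u ((y₁ ^ 2 - y₂ ^ 2) / 2) b) t) (y₁ * y₂)) := by
  have hC2 (p : ℝ × ℝ) (hp : 0 < p.2) : ContDiffAt ℝ 2 (uncurry u) p :=
    hu.contDiffAt ((isOpen_lt continuous_const continuous_snd).mem_nhds hp)
  have hd (p : ℝ × ℝ) (hp : 0 < p.2) : DifferentiableAt ℝ (uncurry u) p :=
    (hC2 p hp).differentiableAt two_ne_zero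
  have hd' : DifferentiableAt ℝ (fderiv ℝ (uncurry u)) ((y₁ ^ 2 - y₂ ^ 2) / 2, y₁ * y₂) :=
    ((hC2 _ (mul_pos h₁ h₂)).fderiv_right (m := 1) le_rfl).differentiableAt one_ne_zero
  rw [deriv_rpow_mul_deriv_comp_squareMap_fst _ hd h₁ h₂ hd',
    deriv_rpow_mul_deriv_comp_squareMap_snd _ hd h₁ h₂ hd',
    deriv_const_mul_deriv_comp_fst hd _ (mul_pos h₁ h₂) hd',
    deriv_rpow_mul_deriv_comp_snd _ hd (mul_pos h₁ h₂) hd']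
  set B := fderiv ℝ (fderiv ℝ (uncurry u)) ((y₁ ^ 2 - y₂ ^ 2) / 2, y₁ * y₂)
  set A := fderiv ℝ (uncurry u) ((y₁ ^ 2 - y₂ ^ 2) / 2, y₁ * y₂)
  have hB := B.apply_apply_add_apply_apply_rotate y₁ y₂
  rw [A.apply_prod_eq y₁ y₂, A.apply_prod_eq (-y₂) y₁, A.apply_prod_eq (-1) 0]
  simp only [smul_eq_mul]
  linear_combination (y₁ * y₂) ^ (1 - 2 * s) * hB

/-- "Opening up the domain": under the square map
`Φ(y₁,y₂) = (½(y₁²-y₂²), y₁y₂)`, the fractional Baouendi–Grushin operator applied to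
`v = u ∘ Φ` equals `(y₁²+y₂²)` times the pullback of `L_s u`. -/
theorem stmt16 (s : ℝ) (hs : s ∈ Set.Ioo (0 : ℝ) 1) (u : ℝ → ℝ → ℝ)
    (hu : ContDiffOn ℝ 2 (fun p : ℝ × ℝ => u p.1 p.2) {p : ℝ × ℝ | 0 < p.2})
    (y₁ y₂ : ℝ) (h₁ : 0 < y₁) (h₂ : 0 < y₂) :
    deriv (fun t => (t * y₂) ^ (1 - 2 * s) *
        deriv (fun a => u ((a ^ 2 - y₂ ^ 2) / 2) (a * y₂)) t) y₁
      + deriv (fun t => (y₁ * t) ^ (1 - 2 * s) *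
          deriv (fun b => u ((y₁ ^ 2 - b ^ 2) / 2) (y₁ * b)) t) y₂
      = (y₁ ^ 2 + y₂ ^ 2) *
          (deriv (fun t => (y₁ * y₂) ^ (1 - 2 * s) *
              deriv (fun a => u a (y₁ * y₂)) t) ((y₁ ^ 2 - y₂ ^ 2) / 2)
            + deriv (fun t => t ^ (1 - 2 * s) *
                deriv (fun b => u ((y₁ ^ 2 - y₂ ^ 2) / 2) b) t) (y₁ * y₂)) :=
  stmt16_general s u hu y₁ y₂ h₁ h₂
end
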